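/- Let w be a weight on ℝ^d satisfying the local A₁ condition Mw(x) ≤ C₀ w(x) for almost every x in the support of w. Then for every 1 < p < ∞ there exists a constant C, depending only on C₀, p, and d, such that for every measurable function f with supp f ⊆ supp w one has ∫ (Mf(x))^p w(x) dx ≤ C ∫ |f(x)|^p w(x) dx; that is, M is bounded on L^p(w). -/

import Mathlib

/-!
Cover a level set `{Mg > a}` by cubes on which `|g|` has average above `a` and extract a
disjoint Vitali subfamily: since the average of `w` over the fivefold cube is at most `Mw` on
the small cube, this gives the Fefferman–Stein inequality `a · w{Mg > a} ≤ 5ᵈ ∫ |g| Mw`. When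
`supp g ⊆ supp w`, the local `A₁` condition bounds the right side by `5ᵈ C₀ ∫ |g| w`, a weak
`(1,1)` estimate in `L¹(w)`. Applied to the part of `f` where `|f| > t/2`, it gives
`t · w{Mf > t} ≤ 2 · 5ᵈ C₀ ∫_{2|f| > t} |f| w`, and integrating against `p t^(p-1) dt` with the
layer-cake formula (Marcinkiewicz interpolation against the trivial `L^∞` bound) yields the
`Lᵖ(w)` bound with constant `2ᵖ 5ᵈ C₀ p / (p - 1)`.
-/

open MeasureTheory Filter Set Metric
open scoped ENNReal Topology NNReal

noncomputable section

/-- The closed axis-parallel cube centered at `c` with half-edge `r` in `ℝ^d`. -/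
def cube {d : ℕ} (c : EuclideanSpace ℝ (Fin d)) (r : ℝ) : Set (EuclideanSpace ℝ (Fin d)) :=
  {y | ∀ i, |y i - c i| ≤ r}

/-- The non-centered Hardy–Littlewood maximal function over axis-parallel cubes,
with values in `ℝ≥0∞`. -/
def maximal {d : ℕ} (f : EuclideanSpace ℝ (Fin d) → ℝ) (x : EuclideanSpace ℝ (Fin d)) : ℝ≥0∞ :=
  ⨆ (c : EuclideanSpace ℝ (Fin d)) (r : ℝ) (_ : 0 < r) (_ : x ∈ cube c r),
    (∫⁻ y in cube c r, (‖f y‖₊ : ℝ≥0∞)) / volume (cube c r)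

/-- The centered Hardy–Littlewood maximal function over axis-parallel cubes. -/
def cmaximal {d : ℕ} (f : EuclideanSpace ℝ (Fin d) → ℝ) (x : EuclideanSpace ℝ (Fin d)) : ℝ≥0∞ :=
  ⨆ (r : ℝ) (_ : 0 < r),
    (∫⁻ y in cube x r, (‖f y‖₊ : ℝ≥0∞)) / volume (cube x r)

section LayerCake

variable {α : Type*} [MeasurableSpace α]

lemma lintegral_Ioi_ofReal_rpow_eq_top (s : ℝ) :
    ∫⁻ t in Ioi (0 : ℝ), ENNReal.ofReal (t ^ s) = ∞ := by
  by_contra h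
  refine not_integrableOn_Ioi_rpow s ((lintegral_ofReal_ne_top_iff_integrable ?_ ?_).1 h)
  · exact (measurable_id.pow_const s).aestronglyMeasurable
  · exact (ae_restrict_iff' measurableSet_Ioi).2
      (ae_of_all _ fun t ht => Real.rpow_nonneg ht.le s)

theorem lintegral_rpow_eq_lintegral_meas_lt_mul_ennreal {μ : Measure α} {F : α → ℝ≥0∞}
    (hF : AEMeasurable F μ) {p : ℝ} (hp : 0 < p) :
    ∫⁻ x, F x ^ p ∂μ = ENNReal.ofReal p *
      ∫⁻ t in Ioi 0, μ {x | ENNReal.ofReal t < F x} * ENNReal.ofReal (t ^ (p - 1)) := by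
  by_cases hinf : μ {x | F x = ∞} = 0
  · have hfin : ∀ᵐ x ∂μ, F x ≠ ∞ := ae_iff.2 (by simpa using hinf)
    calc ∫⁻ x, F x ^ p ∂μ = ∫⁻ x, ENNReal.ofReal ((F x).toReal ^ p) ∂μ :=
          lintegral_congr_ae <| hfin.mono fun x hx => by
            dsimp only
            rw [← ENNReal.ofReal_rpow_of_nonneg ENNReal.toReal_nonneg hp.le,
              ENNReal.ofReal_toReal hx]
      _ = _ := lintegral_rpow_eq_lintegral_meas_lt_mul μ
          (ae_of_all _ fun _ => ENNReal.toReal_nonneg) hF.ennreal_toReal hp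
      _ = _ := by
          refine congrArg _ (setLIntegral_congr_fun measurableSet_Ioi fun t ht => ?_)
          congr 1
          exact measure_congr (hfin.mono fun x hx =>
            (propext (ENNReal.ofReal_lt_iff_lt_toReal ht.le hx)).symm)
  · have hlhs : ∫⁻ x, F x ^ p ∂μ = ∞ :=
      lintegral_eq_top_of_measure_eq_top_ne_zero (hF.pow_const p)
        (by simpa [ENNReal.rpow_eq_top_iff_of_pos hp] using hinf)
    rw [hlhs, eq_comm, eq_top_iff]
    have hmeas : Measurable fun t : ℝ => ENNReal.ofReal (t ^ (p - 1)) := by fun_prop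
    calc ∞ = ENNReal.ofReal p *
          ∫⁻ t in Ioi 0, μ {x | F x = ∞} * ENNReal.ofReal (t ^ (p - 1)) := by
          rw [lintegral_const_mul _ hmeas,
            lintegral_Ioi_ofReal_rpow_eq_top, ENNReal.mul_top hinf,
            ENNReal.mul_top (ENNReal.ofReal_pos.2 hp).ne']
      _ ≤ _ := by
          gcongr with t ht x
          simp_all

theorem lintegral_rpow_le_of_mul_meas_lt_le {ν μ : Measure α} {F : α → ℝ≥0∞}
    (hF : AEMeasurable F ν) {G : α → ℝ} (hG0 : 0 ≤ᵐ[μ] G) (hG : AEMeasurable G μ) {p : ℝ}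
    (hp : 1 < p) {K : ℝ≥0∞}
    (h : ∀ t > 0, ENNReal.ofReal t * ν {x | ENNReal.ofReal t < F x} ≤ K * μ {x | t < G x}) :
    ∫⁻ x, F x ^ p ∂ν ≤
      K * ENNReal.ofReal (p / (p - 1)) * ∫⁻ x, ENNReal.ofReal (G x ^ (p - 1)) ∂μ := by
  have hp1 : 0 < p - 1 := sub_pos.2 hp
  have hanti : Antitone fun t => μ {x | t < G x} := fun s t hst =>
    measure_mono fun x (hx : t < G x) => hst.trans_lt hx
  rw [lintegral_rpow_eq_lintegral_meas_lt_mul_ennreal hF (by linarith),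
    lintegral_rpow_eq_lintegral_meas_lt_mul μ hG0 hG hp1]
  calc ENNReal.ofReal p *
        ∫⁻ t in Ioi 0, ν {x | ENNReal.ofReal t < F x} * ENNReal.ofReal (t ^ (p - 1))
      ≤ ENNReal.ofReal p *
        ∫⁻ t in Ioi 0, K * (μ {x | t < G x} * ENNReal.ofReal (t ^ (p - 1 - 1))) := by
        gcongr 1
        refine setLIntegral_mono' measurableSet_Ioi fun t (ht : 0 < t) => ?_
        have htp : t ^ (p - 1) = t * t ^ (p - 1 - 1) := by
          rw [Real.rpow_sub_one ht.ne' (p - 1)]; field_simp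
        rw [htp, ENNReal.ofReal_mul ht.le, ← mul_assoc, mul_comm _ (ENNReal.ofReal t),
          ← mul_assoc]
        gcongr ?_ * _
        exact h t ht
    _ = K * ENNReal.ofReal (p / (p - 1)) * (ENNReal.ofReal (p - 1) *
          ∫⁻ t in Ioi 0, μ {x | t < G x} * ENNReal.ofReal (t ^ (p - 1 - 1))) := by
        have hmeas : Measurable fun t => μ {x | t < G x} * ENNReal.ofReal (t ^ (p - 1 - 1)) :=
          hanti.measurable.mul (by fun_prop)
        rw [lintegral_const_mul'' _ hmeas.aemeasurable,
          mul_left_comm, mul_assoc K, ← mul_assoc (ENNReal.ofReal _),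
          ← ENNReal.ofReal_mul (div_nonneg (by linarith) hp1.le), div_mul_cancel₀ _ hp1.ne']

end LayerCake

lemma coe_nnnorm_eq_ofReal_abs (a : ℝ) : (‖a‖₊ : ℝ≥0∞) = ENNReal.ofReal |a| := by
  rw [← enorm_eq_nnnorm, Real.enorm_eq_ofReal_abs]

section Cube

variable {d : ℕ}

open WithLp

lemma cube_eq_preimage_closedBall (c : EuclideanSpace ℝ (Fin d)) {r : ℝ} (hr : 0 ≤ r) :
    cube c r = ofLp ⁻¹' closedBall (ofLp c) r := by
  ext y
  simp [cube, dist_pi_le_iff hr, Real.dist_eq]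

lemma cube_mono (c : EuclideanSpace ℝ (Fin d)) {r r' : ℝ} (h : r ≤ r') :
    cube c r ⊆ cube c r' := fun _ hy i => (hy i).trans h

lemma measurableSet_cube (c : EuclideanSpace ℝ (Fin d)) (r : ℝ) : MeasurableSet (cube c r) := by
  simp only [cube, ofPred_forall]
  exact MeasurableSet.iInter fun i =>
    measurableSet_le ((measurable_pi_apply i).comp (PiLp.continuous_ofLp 2 _).measurable
      |>.sub_const _).abs measurable_const

lemma volume_cube (c : EuclideanSpace ℝ (Fin d)) {r : ℝ} (hr : 0 ≤ r) :
    volume (cube c r) = ENNReal.ofReal (2 * r) ^ d := by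
  rw [cube_eq_preimage_closedBall c hr, (PiLp.volume_preserving_ofLp (Fin d)).measure_preimage
    measurableSet_closedBall.nullMeasurableSet, Real.volume_pi_closedBall _ hr, Fintype.card_fin,
    ENNReal.ofReal_pow (by positivity)]

lemma volume_cube_ne_zero (c : EuclideanSpace ℝ (Fin d)) {r : ℝ} (hr : 0 < r) :
    volume (cube c r) ≠ 0 := by
  simp [volume_cube c hr.le, hr]

lemma volume_cube_ne_top (c : EuclideanSpace ℝ (Fin d)) {r : ℝ} (hr : 0 ≤ r) :
    volume (cube c r) ≠ ∞ := by
  rw [volume_cube c hr]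
  exact ENNReal.pow_ne_top ENNReal.ofReal_ne_top

lemma volume_cube_mul (c : EuclideanSpace ℝ (Fin d)) {r k : ℝ} (hr : 0 ≤ r) (hk : 0 ≤ k) :
    volume (cube c (k * r)) = ENNReal.ofReal k ^ d * volume (cube c r) := by
  rw [volume_cube c (mul_nonneg hk hr), volume_cube c hr, ← mul_pow, ← ENNReal.ofReal_mul hk,
    mul_left_comm]

lemma nonempty_interior_cube (c : EuclideanSpace ℝ (Fin d)) {r : ℝ} (hr : 0 < r) :
    (interior (cube c r)).Nonempty := by
  rw [cube_eq_preimage_closedBall c hr.le]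
  have hopen : IsOpen (ofLp ⁻¹' ball (ofLp c) r : Set (EuclideanSpace ℝ (Fin d))) :=
    isOpen_ball.preimage (PiLp.continuous_ofLp 2 _)
  exact ⟨c, interior_mono (preimage_mono ball_subset_closedBall)
    (by rw [IsOpen.interior_eq hopen]; exact mem_ball_self hr)⟩

lemma exists_disjoint_subfamily_cube_subset_cube_five_mul {ι : Type*} (t : Set ι)
    (c : ι → EuclideanSpace ℝ (Fin d)) (r : ι → ℝ) (hr : ∀ a ∈ t, 0 ≤ r a) (R : ℝ)
    (hR : ∀ a ∈ t, r a ≤ R) :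
    ∃ u ⊆ t, u.PairwiseDisjoint (fun a => cube (c a) (r a)) ∧
      ∀ a ∈ t, ∃ b ∈ u, cube (c a) (r a) ⊆ cube (c b) (5 * r b) := by
  obtain ⟨u, hut, hdisj, hcov⟩ :=
    Vitali.exists_disjoint_subfamily_covering_enlargement_closedBall t (fun a => ofLp (c a)) r R hR
      5 (by norm_num)
  refine ⟨u, hut, fun a ha b hb hab => ?_, fun a ha => ?_⟩
  · simp only [Function.onFun, cube_eq_preimage_closedBall _ (hr _ (hut ha)),
      cube_eq_preimage_closedBall _ (hr _ (hut hb))]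
    exact (hdisj ha hb hab).preimage _
  · obtain ⟨b, hb, hab⟩ := hcov a ha
    refine ⟨b, hb, ?_⟩
    rw [cube_eq_preimage_closedBall _ (hr a ha),
      cube_eq_preimage_closedBall _ (by linarith [hr b (hut hb)])]
    exact preimage_mono hab

lemma cube_mem_nhds {x c : EuclideanSpace ℝ (Fin d)} {r r' : ℝ} (hx : x ∈ cube c r) (hr : 0 ≤ r)
    (hrr' : r < r') :
    cube c r' ∈ 𝓝 x := by
  rw [cube_eq_preimage_closedBall c (hr.trans hrr'.le)]
  refine mem_of_superset ?_ (preimage_mono ball_subset_closedBall)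
  refine (PiLp.continuous_ofLp 2 _).continuousAt.preimage_mem_nhds (isOpen_ball.mem_nhds ?_)
  rw [cube_eq_preimage_closedBall c hr] at hx
  exact (mem_closedBall.1 hx).trans_lt hrr'

end Cube

section Maximal

variable {d : ℕ} {f g : EuclideanSpace ℝ (Fin d) → ℝ} {x c : EuclideanSpace ℝ (Fin d)}
  {r : ℝ}

lemma le_maximal (hr : 0 < r) (hx : x ∈ cube c r) :
    (∫⁻ y in cube c r, (‖f y‖₊ : ℝ≥0∞)) / volume (cube c r) ≤ maximal f x :=
  le_iSup₂_of_le c r <| le_iSup₂_of_le (α := ℝ≥0∞) hr hx le_rfl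

lemma maximal_le {b : ℝ≥0∞}
    (h : ∀ c r, 0 < r → x ∈ cube c r →
      (∫⁻ y in cube c r, (‖f y‖₊ : ℝ≥0∞)) / volume (cube c r) ≤ b) :
    maximal f x ≤ b :=
  iSup₂_le fun c r => iSup₂_le fun hr hx => h c r hr hx

lemma lt_maximal_iff {a : ℝ≥0∞} :
    a < maximal f x ↔ ∃ c r, 0 < r ∧ x ∈ cube c r ∧
      a < (∫⁻ y in cube c r, (‖f y‖₊ : ℝ≥0∞)) / volume (cube c r) := by
  simp only [maximal, lt_iSup_iff, exists_prop]

lemma maximal_le_maximal_add {s : ℝ} (hs : 0 ≤ s) (h : ∀ y, |f y| ≤ |g y| + s) (x) :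
    maximal f x ≤ maximal g x + ENNReal.ofReal s := by
  refine maximal_le fun c r hr hx => ?_
  have hV0 := volume_cube_ne_zero c hr
  have hVtop := volume_cube_ne_top c hr.le
  calc (∫⁻ y in cube c r, (‖f y‖₊ : ℝ≥0∞)) / volume (cube c r)
      ≤ (∫⁻ y in cube c r, ((‖g y‖₊ : ℝ≥0∞) + ENNReal.ofReal s)) / volume (cube c r) := by
        gcongr with y
        rw [coe_nnnorm_eq_ofReal_abs, coe_nnnorm_eq_ofReal_abs,
          ← ENNReal.ofReal_add (abs_nonneg _) hs]
        exact ENNReal.ofReal_le_ofReal (h y)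
    _ = (∫⁻ y in cube c r, (‖g y‖₊ : ℝ≥0∞)) / volume (cube c r) + ENNReal.ofReal s := by
        rw [lintegral_add_right _ measurable_const, setLIntegral_const, ENNReal.add_div,
          ENNReal.mul_div_cancel_right hV0 hVtop]
    _ ≤ maximal g x + ENNReal.ofReal s := by gcongr; exact le_maximal hr hx

lemma exists_gt_lt_average_cube {t : ℝ≥0∞} (hr : 0 < r)
    (ht : t < (∫⁻ y in cube c r, (‖f y‖₊ : ℝ≥0∞)) / volume (cube c r)) :
    ∃ r' > r, t < (∫⁻ y in cube c r', (‖f y‖₊ : ℝ≥0∞)) / volume (cube c r') := by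
  set I := ∫⁻ y in cube c r, (‖f y‖₊ : ℝ≥0∞)
  have htop : t ≠ ∞ := ht.ne_top
  have hcont : Continuous fun r' : ℝ => t * ENNReal.ofReal (2 * r') ^ d :=
    (ENNReal.continuous_const_mul htop).comp ((ENNReal.continuous_pow d).comp
      (ENNReal.continuous_ofReal.comp (continuous_const.mul continuous_id)))
  have hlt : t * ENNReal.ofReal (2 * r) ^ d < I := by
    rwa [← volume_cube c hr.le, ← ENNReal.lt_div_iff_mul_lt (Or.inl (volume_cube_ne_zero c hr))
      (Or.inl (volume_cube_ne_top c hr.le))]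
  obtain ⟨r', hlt', hrr'⟩ := ((hcont.continuousAt.eventually_lt_const hlt).filter_mono
    nhdsWithin_le_nhds |>.and self_mem_nhdsWithin).exists (f := 𝓝[>] r)
  refine ⟨r', hrr', ?_⟩
  have hr' : 0 < r' := hr.trans hrr'
  rw [ENNReal.lt_div_iff_mul_lt (Or.inl (volume_cube_ne_zero c hr'))
    (Or.inl (volume_cube_ne_top c hr'.le)), volume_cube c hr'.le]
  exact hlt'.trans_le (lintegral_mono_set (cube_mono c hrr'.le))

lemma lowerSemicontinuous_maximal (f : EuclideanSpace ℝ (Fin d) → ℝ) :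
    LowerSemicontinuous (maximal f) := by
  intro x t ht
  obtain ⟨c, r, hr, hx, hlt⟩ := lt_maximal_iff.1 ht
  obtain ⟨r', hrr', hlt'⟩ := exists_gt_lt_average_cube hr hlt
  filter_upwards [cube_mem_nhds hx hr.le hrr'] with y hy
  exact hlt'.trans_le (le_maximal (hr.trans hrr') hy)

lemma measurable_maximal (f : EuclideanSpace ℝ (Fin d) → ℝ) : Measurable (maximal f) :=
  (lowerSemicontinuous_maximal f).measurable

end Maximal

section WeakType

variable {d : ℕ} {w g : EuclideanSpace ℝ (Fin d) → ℝ}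

lemma withDensity_ofReal_cube (hw0 : 0 ≤ w) (c : EuclideanSpace ℝ (Fin d)) (r : ℝ) :
    volume.withDensity (fun x => ENNReal.ofReal (w x)) (cube c r) =
      ∫⁻ y in cube c r, (‖w y‖₊ : ℝ≥0∞) := by
  rw [withDensity_apply _ (measurableSet_cube c r)]
  refine setLIntegral_congr_fun (measurableSet_cube c r) fun y _ => ?_
  rw [coe_nnnorm_eq_ofReal_abs, abs_of_nonneg (hw0 y)]

lemma mul_withDensity_cube_five_mul_le (hw0 : 0 ≤ w) (hg : Measurable g)
    {c : EuclideanSpace ℝ (Fin d)} {r : ℝ} (hr : 0 < r) {a : ℝ≥0∞}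
    (ha : a ≤ (∫⁻ y in cube c r, (‖g y‖₊ : ℝ≥0∞)) / volume (cube c r)) :
    a * volume.withDensity (fun x => ENNReal.ofReal (w x)) (cube c (5 * r)) ≤
      5 ^ d * ∫⁻ y in cube c r, (‖g y‖₊ : ℝ≥0∞) * maximal w y := by
  set N := volume.withDensity (fun x => ENNReal.ofReal (w x)) (cube c (5 * r))
  set I := ∫⁻ y in cube c r, (‖g y‖₊ : ℝ≥0∞)
  set V := volume (cube c r)
  have h5V : volume (cube c (5 * r)) = 5 ^ d * V := by
    rw [volume_cube_mul c hr.le (by norm_num), ENNReal.ofReal_ofNat]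
  have h50 : (5 : ℝ≥0∞) ^ d ≠ 0 := pow_ne_zero _ (by norm_num)
  have h5top : (5 : ℝ≥0∞) ^ d ≠ ∞ := ENNReal.pow_ne_top (by norm_num)
  have hM : ∀ y ∈ cube c r, N / (5 ^ d * V) ≤ maximal w y := fun y hy => by
    rw [← h5V, show N = _ from withDensity_ofReal_cube hw0 c (5 * r)]
    exact le_maximal (by linarith) (cube_mono c (by linarith) hy)
  calc a * N ≤ I / V * N := by gcongr
    _ = 5 ^ d * (I * (N / (5 ^ d * V))) := by
        rw [div_eq_mul_inv, div_eq_mul_inv, ENNReal.mul_inv (Or.inl h50) (Or.inl h5top),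
          show 5 ^ d * (I * (N * ((5 ^ d)⁻¹ * V⁻¹))) = 5 ^ d * (5 ^ d)⁻¹ * (I * V⁻¹ * N) by
            ring,
          ENNReal.mul_inv_cancel h50 h5top, one_mul]
    _ = 5 ^ d * ∫⁻ y in cube c r, (‖g y‖₊ : ℝ≥0∞) * (N / (5 ^ d * V)) := by
        rw [lintegral_mul_const'' _ hg.nnnorm.coe_nnreal_ennreal.aemeasurable]
    _ ≤ 5 ^ d * ∫⁻ y in cube c r, (‖g y‖₊ : ℝ≥0∞) * maximal w y := by
        gcongr 1
        exact setLIntegral_mono' (measurableSet_cube c r) fun y hy => by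
          gcongr; exact hM y hy

lemma mul_withDensity_biUnion_cube_le (hw0 : 0 ≤ w) (hg : Measurable g) {ι : Type*}
    (t : Set ι) (c : ι → EuclideanSpace ℝ (Fin d)) (r : ι → ℝ) (hr : ∀ i ∈ t, 0 < r i) (R : ℝ)
    (hR : ∀ i ∈ t, r i ≤ R) {a : ℝ≥0∞}
    (ha : ∀ i ∈ t,
      a ≤ (∫⁻ y in cube (c i) (r i), (‖g y‖₊ : ℝ≥0∞)) / volume (cube (c i) (r i))) :
    a * volume.withDensity (fun x => ENNReal.ofReal (w x)) (⋃ i ∈ t, cube (c i) (r i)) ≤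
      5 ^ d * ∫⁻ y, (‖g y‖₊ : ℝ≥0∞) * maximal w y := by
  set ν := volume.withDensity (fun x => ENNReal.ofReal (w x))
  obtain ⟨u, hut, hdisj, hcov⟩ := exists_disjoint_subfamily_cube_subset_cube_five_mul t c r
    (fun i hi => (hr i hi).le) R hR
  have hu : u.Countable :=
    hdisj.countable_of_nonempty_interior fun i hi => nonempty_interior_cube _ (hr i (hut hi))
  have : Countable u := hu.to_subtype
  calc a * ν (⋃ i ∈ t, cube (c i) (r i))
      ≤ a * ν (⋃ i ∈ u, cube (c i) (5 * r i)) := by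
        refine mul_le_mul_right (measure_mono (iUnion₂_subset fun i hi => ?_)) a
        obtain ⟨j, hj, hij⟩ := hcov i hi
        exact hij.trans (subset_biUnion_of_mem (u := fun i => cube (c i) (5 * r i)) hj)
    _ ≤ ∑' i : u, a * ν (cube (c i) (5 * r i)) := by
        rw [ENNReal.tsum_mul_left]
        gcongr
        exact measure_biUnion_le ν hu _
    _ ≤ ∑' i : u, 5 ^ d * ∫⁻ y in cube (c i) (r i), (‖g y‖₊ : ℝ≥0∞) * maximal w y :=
        ENNReal.tsum_le_tsum fun i =>
          mul_withDensity_cube_five_mul_le hw0 hg (hr i (hut i.2)) (ha i (hut i.2))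
    _ = 5 ^ d * ∫⁻ y in ⋃ i : u, cube (c i) (r i), (‖g y‖₊ : ℝ≥0∞) * maximal w y := by
        rw [ENNReal.tsum_mul_left, lintegral_iUnion (fun i => measurableSet_cube _ _)
          fun (i j : u) hij => hdisj i.2 j.2 (Subtype.coe_injective.ne hij)]
    _ ≤ 5 ^ d * ∫⁻ y, (‖g y‖₊ : ℝ≥0∞) * maximal w y := by
        gcongr
        exact Measure.restrict_le_self

theorem mul_withDensity_lt_maximal_le (hw0 : 0 ≤ w) (hg : Measurable g) (a : ℝ≥0∞) :
    a * volume.withDensity (fun x => ENNReal.ofReal (w x)) {x | a < maximal g x} ≤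
      5 ^ d * ∫⁻ y, (‖g y‖₊ : ℝ≥0∞) * maximal w y := by
  set ν := volume.withDensity (fun x => ENNReal.ofReal (w x))
  let t (n : ℕ) : Set (EuclideanSpace ℝ (Fin d) × ℝ) := {i | 0 < i.2 ∧ i.2 ≤ n ∧
    a < (∫⁻ y in cube i.1 i.2, (‖g y‖₊ : ℝ≥0∞)) / volume (cube i.1 i.2)}
  have hmono : Monotone fun n => ⋃ i ∈ t n, cube i.1 i.2 := fun m n hmn =>
    biUnion_mono (fun i hi => ⟨hi.1, hi.2.1.trans (by exact_mod_cast hmn), hi.2.2⟩)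
      fun _ _ => subset_rfl
  have hcover : {x | a < maximal g x} ⊆ ⋃ n, ⋃ i ∈ t n, cube i.1 i.2 := fun x hx => by
    obtain ⟨c, r, hr, hx, hlt⟩ := lt_maximal_iff.1 hx
    obtain ⟨n, hn⟩ := exists_nat_ge r
    exact mem_iUnion.2 ⟨n, mem_biUnion (x := (c, r)) ⟨hr, hn, hlt⟩ hx⟩
  calc a * ν {x | a < maximal g x} ≤ a * ⨆ n, ν (⋃ i ∈ t n, cube i.1 i.2) := by
        rw [← hmono.measure_iUnion]
        gcongr
    _ = ⨆ n, a * ν (⋃ i ∈ t n, cube i.1 i.2) := ENNReal.mul_iSup _ _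
    _ ≤ 5 ^ d * ∫⁻ y, (‖g y‖₊ : ℝ≥0∞) * maximal w y :=
        iSup_le fun n => mul_withDensity_biUnion_cube_le hw0 hg (t n) Prod.fst Prod.snd
          (fun i hi => hi.1) n (fun i hi => hi.2.1) fun i hi => hi.2.2.le

end WeakType

section LocalA1

variable {d : ℕ} {w f g : EuclideanSpace ℝ (Fin d) → ℝ} {C₀ : ℝ}

lemma lintegral_mul_maximal_le_of_local_A1 (hw0 : 0 ≤ w)
    (hA1 : ∀ᵐ x, x ∈ Function.support w → maximal w x ≤ ENNReal.ofReal (C₀ * w x))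
    (hgw : Function.support g ⊆ Function.support w) :
    ∫⁻ y, (‖g y‖₊ : ℝ≥0∞) * maximal w y ≤
      ENNReal.ofReal C₀ * ∫⁻ y, (‖g y‖₊ : ℝ≥0∞) * ENNReal.ofReal (w y) := by
  rw [← lintegral_const_mul' _ _ ENNReal.ofReal_ne_top]
  refine lintegral_mono_ae (hA1.mono fun y hy => ?_)
  by_cases hgy : g y = 0
  · simp [hgy]
  · calc (‖g y‖₊ : ℝ≥0∞) * maximal w y ≤ ‖g y‖₊ * ENNReal.ofReal (C₀ * w y) := by
          gcongr; exact hy (hgw hgy)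
      _ = _ := by rw [ENNReal.ofReal_mul' (hw0 y)]; ring

lemma ofReal_mul_withDensity_lt_maximal_le (hw0 : 0 ≤ w)
    (hA1 : ∀ᵐ x, x ∈ Function.support w → maximal w x ≤ ENNReal.ofReal (C₀ * w x))
    (hf : Measurable f) (hfw : Function.support f ⊆ Function.support w) {t : ℝ} (ht : 0 < t) :
    ENNReal.ofReal t * volume.withDensity (fun x => ENNReal.ofReal (w x))
        {x | ENNReal.ofReal t < maximal f x} ≤
      2 * 5 ^ d * ENNReal.ofReal C₀ *
        volume.withDensity (fun y => ‖f y‖₊ * ENNReal.ofReal (w y)) {y | t < 2 * |f y|} := by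
  set ν := volume.withDensity (fun x => ENNReal.ofReal (w x))
  set S := {y | t < 2 * |f y|}
  have hS : MeasurableSet S := measurableSet_lt measurable_const (hf.abs.const_mul 2)
  set g := S.indicator f
  have hfg : ∀ y, |f y| ≤ |g y| + t / 2 := fun y => by
    by_cases hy : y ∈ S
    · simp only [g, indicator_of_mem hy]
      linarith
    · simp only [g, indicator_of_notMem hy, abs_zero, zero_add]
      exact le_of_not_gt fun h => hy (show t < 2 * |f y| by linarith)
  have hsub :
      {x | ENNReal.ofReal t < maximal f x} ⊆ {x | ENNReal.ofReal (t / 2) < maximal g x} :=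
    fun x (hx : ENNReal.ofReal t < maximal f x) => by
      show ENNReal.ofReal (t / 2) < maximal g x
      by_contra! hgx
      refine hx.not_ge ?_
      calc maximal f x ≤ maximal g x + ENNReal.ofReal (t / 2) :=
            maximal_le_maximal_add (by positivity) hfg x
        _ ≤ ENNReal.ofReal (t / 2) + ENNReal.ofReal (t / 2) := by gcongr
        _ = ENNReal.ofReal t := by
            rw [← ENNReal.ofReal_add (by positivity) (by positivity), add_halves]
  have hg : ∫⁻ y, (‖g y‖₊ : ℝ≥0∞) * ENNReal.ofReal (w y) =
      volume.withDensity (fun y => ‖f y‖₊ * ENNReal.ofReal (w y)) S := by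
    rw [withDensity_apply _ hS, ← lintegral_indicator hS]
    congr 1 with y
    by_cases hy : y ∈ S <;> simp [g, hy]
  have h2 : ENNReal.ofReal t = 2 * ENNReal.ofReal (t / 2) := by
    rw [← ENNReal.ofReal_ofNat 2, ← ENNReal.ofReal_mul (by norm_num),
      mul_div_cancel₀ _ two_ne_zero]
  calc ENNReal.ofReal t * ν {x | ENNReal.ofReal t < maximal f x}
      ≤ ENNReal.ofReal t * ν {x | ENNReal.ofReal (t / 2) < maximal g x} :=
        mul_le_mul_right (measure_mono hsub) _
    _ = 2 * (ENNReal.ofReal (t / 2) * ν {x | ENNReal.ofReal (t / 2) < maximal g x}) := by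
        rw [← mul_assoc, ← h2]
    _ ≤ 2 * (5 ^ d * ∫⁻ y, (‖g y‖₊ : ℝ≥0∞) * maximal w y) := by
        gcongr 2 * ?_
        exact mul_withDensity_lt_maximal_le hw0 (hf.indicator hS) _
    _ ≤ 2 * (5 ^ d *
          (ENNReal.ofReal C₀ * ∫⁻ y, (‖g y‖₊ : ℝ≥0∞) * ENNReal.ofReal (w y))) := by
        gcongr
        exact lintegral_mul_maximal_le_of_local_A1 hw0 hA1
          (by rw [support_indicator]; exact inter_subset_right.trans hfw)
    _ = _ := by rw [hg]; ring

end LocalA1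

lemma ofReal_mul_ofReal_two_mul_rpow_sub_one {a : ℝ} (ha : 0 ≤ a) {p : ℝ} (hp : 0 < p) :
    ENNReal.ofReal a * ENNReal.ofReal ((2 * a) ^ (p - 1)) =
      ENNReal.ofReal (2 ^ (p - 1)) * ENNReal.ofReal a ^ p := by
  rw [ENNReal.ofReal_rpow_of_nonneg ha hp.le, ← ENNReal.ofReal_mul ha,
    ← ENNReal.ofReal_mul (by positivity), Real.mul_rpow zero_le_two ha]
  have hap : a ^ p = a ^ (p - 1) * a := by
    rw [← Real.rpow_add_one' ha (by linarith), sub_add_cancel]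
  rw [hap]
  ac_rfl

theorem lintegral_maximal_rpow_mul_le_of_local_A1 {d : ℕ} {w : EuclideanSpace ℝ (Fin d) → ℝ}
    (hw0 : 0 ≤ w) (hw : AEMeasurable w) {C₀ : ℝ}
    (hA1 : ∀ᵐ x, x ∈ Function.support w → maximal w x ≤ ENNReal.ofReal (C₀ * w x))
    {p : ℝ} (hp : 1 < p) {f : EuclideanSpace ℝ (Fin d) → ℝ} (hf : Measurable f)
    (hfw : Function.support f ⊆ Function.support w) :
    ∫⁻ x, maximal f x ^ p * ENNReal.ofReal (w x) ≤
      ENNReal.ofReal (2 ^ p * 5 ^ d * C₀ * (p / (p - 1))) *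
        ∫⁻ x, (‖f x‖₊ : ℝ≥0∞) ^ p * ENNReal.ofReal (w x) := by
  have hW : AEMeasurable (fun x => ENNReal.ofReal (w x)) := hw.ennreal_ofReal
  have hfW : AEMeasurable (fun y => (‖f y‖₊ : ℝ≥0∞) * ENNReal.ofReal (w y)) := by fun_prop
  have hp0 : 0 < p := by linarith
  calc ∫⁻ x, maximal f x ^ p * ENNReal.ofReal (w x)
      = ∫⁻ x, maximal f x ^ p ∂volume.withDensity (fun x => ENNReal.ofReal (w x)) := by
        rw [lintegral_withDensity_eq_lintegral_mul₀ hW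
          ((measurable_maximal f).pow_const p).aemeasurable]
        simp only [Pi.mul_apply, mul_comm]
    _ ≤ 2 * 5 ^ d * ENNReal.ofReal C₀ * ENNReal.ofReal (p / (p - 1)) *
          ∫⁻ y, ENNReal.ofReal ((2 * |f y|) ^ (p - 1))
            ∂volume.withDensity (fun y => ‖f y‖₊ * ENNReal.ofReal (w y)) :=
        lintegral_rpow_le_of_mul_meas_lt_le (measurable_maximal f).aemeasurable
          (ae_of_all _ fun y => by positivity) (by fun_prop) hp
          fun t ht => ofReal_mul_withDensity_lt_maximal_le hw0 hA1 hf hfw ht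
    _ = 2 * 5 ^ d * ENNReal.ofReal C₀ * ENNReal.ofReal (p / (p - 1)) *
          (ENNReal.ofReal (2 ^ (p - 1)) *
            ∫⁻ x, (‖f x‖₊ : ℝ≥0∞) ^ p * ENNReal.ofReal (w x)) := by
        rw [lintegral_withDensity_eq_lintegral_mul₀ hfW (by fun_prop),
          ← lintegral_const_mul' _ _ ENNReal.ofReal_ne_top]
        congr 2 with y
        simp only [Pi.mul_apply, coe_nnnorm_eq_ofReal_abs]
        rw [mul_right_comm, ofReal_mul_ofReal_two_mul_rpow_sub_one (abs_nonneg _) hp0]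
        ring
    _ = _ := by
        have h2p : (2 : ℝ) ^ p = 2 * 2 ^ (p - 1) := by
          rw [Real.rpow_sub_one two_ne_zero]; ring
        rw [ENNReal.ofReal_mul' (div_nonneg hp0.le (by linarith)),
          ENNReal.ofReal_mul (by positivity), ENNReal.ofReal_mul (by positivity), h2p,
          ENNReal.ofReal_mul zero_le_two,
          ENNReal.ofReal_pow (by norm_num), ENNReal.ofReal_ofNat, ENNReal.ofReal_ofNat]
        ring

/-- **Local `A₁` implies `M` is bounded on `Lᵖ(w)`.** If `Mw ≤ C₀ w` a.e. on the
support of `w`, then for each `1 < p < ∞` there is a constant `C` (depending only on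
`C₀`, `p`, `d`) such that `∫ (Mf)^p w ≤ C ∫ |f|^p w` for all `f` supported in
`supp w`. -/
theorem maximal_bounded_on_Lp_of_local_A1
    (d : ℕ) (w : EuclideanSpace ℝ (Fin d) → ℝ)
    (hw0 : 0 ≤ w) (hw : LocallyIntegrable w volume) (C₀ : ℝ)
    (hA1 : ∀ᵐ x ∂(volume : Measure (EuclideanSpace ℝ (Fin d))),
      x ∈ Function.support w → maximal w x ≤ ENNReal.ofReal (C₀ * w x))
    (p : ℝ) (hp : 1 < p) :
    ∃ C : ℝ, 0 < C ∧
      ∀ f : EuclideanSpace ℝ (Fin d) → ℝ, Measurable f →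
        Function.support f ⊆ Function.support w →
        ∫⁻ x, maximal f x ^ p * ENNReal.ofReal (w x)
          ≤ ENNReal.ofReal C * ∫⁻ x, (‖f x‖₊ : ℝ≥0∞) ^ p * ENNReal.ofReal (w x) := by
  have hp1 : 0 < p - 1 := sub_pos.2 hp
  refine ⟨2 ^ p * 5 ^ d * max C₀ 1 * (p / (p - 1)), by positivity, fun f hf hfw => ?_⟩
  calc ∫⁻ x, maximal f x ^ p * ENNReal.ofReal (w x)
      ≤ ENNReal.ofReal (2 ^ p * 5 ^ d * C₀ * (p / (p - 1))) *
          ∫⁻ x, (‖f x‖₊ : ℝ≥0∞) ^ p * ENNReal.ofReal (w x) :=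
        lintegral_maximal_rpow_mul_le_of_local_A1 hw0 hw.aestronglyMeasurable.aemeasurable hA1 hp
          hf hfw
    _ ≤ _ := by
        gcongr
        exact le_max_left _ _
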